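/- arXiv:1710.08978 — 3 statements merged into one kernel-verified Lean document; each statement's English description precedes it below -/
import Mathlib

section
/- Let n, q ≥ 1, let A be an invertible Hermitian n×n complex matrix, K a Hermitian n×n complex matrix, B an n×q complex matrix, and C a Hermitian q×q complex matrix. Define the (n+q)×(n+q) block matrices R = [A, B ; B^†, C] and S = [K, K A^{−1} B ; B^† A^{−1} K, C − B^† A^{−1} B + B^† A^{−1} K A^{−1} B]. Then for all u = (u_1, u_2) and v = (v_1, v_2) in ℂ^{n+q} (partitioned conformably), u^† (S − R) v = (u_1 + A^{−1} B u_2)^† (K − A) (v_1 + A^{−1} B v_2). -/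
open Matrix

noncomputable section

lemma star_sum_elim' {α n q : Type*} [Star α] (a : n → α) (b : q → α) :
    star (Sum.elim a b) = Sum.elim (star a) (star b) := by
  ext (i|i) <;> rfl

/-- block-matrix identity
`u† (S − R) v = (u₁ + A⁻¹B u₂)† (K − A) (v₁ + A⁻¹B v₂)`. -/
theorem stmt_8 (n q : ℕ) (hn : 1 ≤ n) (hq : 1 ≤ q)
    (A K : Matrix (Fin n) (Fin n) ℂ) (hA : A.IsHermitian) (hAinv : IsUnit A.det)
    (hK : K.IsHermitian)
    (B : Matrix (Fin n) (Fin q) ℂ) (C : Matrix (Fin q) (Fin q) ℂ) (hC : C.IsHermitian)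
    (u v : Fin n ⊕ Fin q → ℂ) :
    let R := Matrix.fromBlocks A B Bᴴ C
    let S := Matrix.fromBlocks K (K * A⁻¹ * B) (Bᴴ * A⁻¹ * K)
      (C - Bᴴ * A⁻¹ * B + Bᴴ * A⁻¹ * K * A⁻¹ * B)
    star u ⬝ᵥ ((S - R) *ᵥ v)
      = star ((u ∘ Sum.inl) + (A⁻¹ * B) *ᵥ (u ∘ Sum.inr)) ⬝ᵥ
          ((K - A) *ᵥ ((v ∘ Sum.inl) + (A⁻¹ * B) *ᵥ (v ∘ Sum.inr))) := by
  intro R S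
  have hA1 : A * A⁻¹ = 1 := mul_nonsing_inv A hAinv
  have hA2 : A⁻¹ * A = 1 := nonsing_inv_mul A hAinv
  have hAi : (A⁻¹)ᴴ = A⁻¹ := (hA.inv).eq
  have hMt : (A⁻¹ * B)ᴴ = Bᴴ * A⁻¹ := by rw [conjTranspose_mul, hAi]
  have e1 : (K - A) * (A⁻¹ * B) = K * A⁻¹ * B - B := by
    rw [Matrix.sub_mul, ← Matrix.mul_assoc, ← Matrix.mul_assoc, hA1, Matrix.one_mul]
  have e2 : (A⁻¹ * B)ᴴ * (K - A) = Bᴴ * A⁻¹ * K - Bᴴ := by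
    rw [hMt, Matrix.mul_sub, Matrix.mul_assoc Bᴴ A⁻¹ A, hA2, Matrix.mul_one]
  have e3 : (A⁻¹ * B)ᴴ * (K - A) * (A⁻¹ * B)
      = (C - Bᴴ * A⁻¹ * B + Bᴴ * A⁻¹ * K * A⁻¹ * B) - C := by
    rw [e2, Matrix.sub_mul]
    simp only [← Matrix.mul_assoc]
    abel
  have hSR : S - R = fromBlocks (K - A) ((K - A) * (A⁻¹ * B))
      ((A⁻¹ * B)ᴴ * (K - A)) ((A⁻¹ * B)ᴴ * (K - A) * (A⁻¹ * B)) := by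
    rw [e3, e2, e1]
    ext (i|i) (j|j) <;> simp [S, R, fromBlocks]
  rw [hSR]
  have hu : u = Sum.elim (u ∘ Sum.inl) (u ∘ Sum.inr) := by ext (i|i) <;> rfl
  have hv : v = Sum.elim (v ∘ Sum.inl) (v ∘ Sum.inr) := by ext (i|i) <;> rfl
  rw [hu, hv, fromBlocks_mulVec]
  simp only [Sum.elim_comp_inl, Sum.elim_comp_inr, star_sum_elim',
    sumElim_dotProduct_sumElim]
  have key : ∀ (x : Fin q → ℂ) (y : Fin n → ℂ),
      star x ⬝ᵥ (A⁻¹ * B)ᴴ *ᵥ y = star ((A⁻¹ * B) *ᵥ x) ⬝ᵥ y := by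
    intro x y
    rw [dotProduct_mulVec, star_mulVec]
  simp only [← mulVec_mulVec, mulVec_add, dotProduct_add, star_add,
    add_dotProduct, key]
  ring

end
end

section
/- Let R = [A, B ; B^†, C] be an m×m Hermitian complex matrix, partitioned with A of size n×n (1 ≤ n < m), and suppose every eigenvalue of R lies in the interval [f_min, f_max] with 0 < f_min ≤ f_max. Then A is positive definite (hence invertible), the spectral norm satisfies ‖A^{−1} B‖₂ ≤ (f_max/f_min)^{1/2}, and for all u_1 ∈ ℂ^n, u_2 ∈ ℂ^{m−n}, ‖u_1 + A^{−1} B u_2‖₂ ≤ ‖u_1‖₂ + (f_max/f_min)^{1/2} ‖u_2‖₂. -/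
open Matrix
open scoped ComplexOrder

noncomputable section

/-- Euclidean (`ℓ²`) norm of a complex vector. -/
def l2norm {ι : Type*} [Fintype ι] (v : ι → ℂ) : ℝ := Real.sqrt (∑ i, ‖v i‖ ^ 2)

/-- Spectral norm (largest singular value) of a complex matrix: the supremum of
`‖M v‖₂` over the `ℓ²` unit ball. -/
def specNorm {ι κ : Type*} [Fintype ι] [Fintype κ] (M : Matrix ι κ ℂ) : ℝ :=
  sSup {c : ℝ | ∃ v : κ → ℂ, l2norm v ≤ 1 ∧ c = l2norm (M *ᵥ v)}

/-! Eigenvalues of `R` in `[a, b]` mean `a • 1 ≤ R ≤ b • 1` in the Loewner order. Compressing to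
the diagonal blocks gives `a • 1 ≤ A`, so `A` is positive definite, and `C ≤ b • 1`. For
`X = A⁻¹ B`, the congruence by `V = [-X; 1]` annihilates the first block row of `R V`, so
`Vᴴ R V = C - Bᴴ A⁻¹ B ≤ C`, while `Vᴴ (a • 1) V = a • (Xᴴ X + 1)`. Hence
`a • Xᴴ X ≤ (b - a) • 1`, i.e. `‖X‖₂² ≤ (b - a) / a ≤ b / a`. -/

open scoped MatrixOrder

namespace Matrix

variable {𝕜 m n : Type*} [RCLike 𝕜]

theorem IsHermitian.smul_one_le_of_le_eigenvalues [Fintype n] [DecidableEq n] {M : Matrix n n 𝕜}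
    (hM : M.IsHermitian) {a : ℝ} (h : ∀ i, a ≤ hM.eigenvalues i) : a • 1 ≤ M := by
  rw [← Algebra.algebraMap_eq_smul_one, algebraMap_le_iff_le_spectrum (a := M) hM.isSelfAdjoint,
    hM.spectrum_real_eq_range_eigenvalues]
  rintro _ ⟨i, rfl⟩
  exact h i

theorem IsHermitian.le_smul_one_of_eigenvalues_le [Fintype n] [DecidableEq n] {M : Matrix n n 𝕜}
    (hM : M.IsHermitian) {b : ℝ} (h : ∀ i, hM.eigenvalues i ≤ b) : M ≤ b • 1 := by
  rw [← Algebra.algebraMap_eq_smul_one, le_algebraMap_iff_spectrum_le (a := M) hM.isSelfAdjoint,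
    hM.spectrum_real_eq_range_eigenvalues]
  rintro _ ⟨i, rfl⟩
  exact h i

theorem submatrix_le_submatrix {M N : Matrix n n 𝕜} (h : M ≤ N) (e : m → n) :
    M.submatrix e e ≤ N.submatrix e e := by
  simpa only [le_iff, submatrix_sub, Pi.sub_apply] using h.submatrix e

theorem smul_one_le_of_smul_one_le_fromBlocks [DecidableEq m] [DecidableEq n] {a : ℝ}
    {A : Matrix m m 𝕜} {B : Matrix m n 𝕜} {C : Matrix n m 𝕜} {D : Matrix n n 𝕜}
    (h : a • 1 ≤ fromBlocks A B C D) : a • 1 ≤ A := by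
  have h₁₁ := submatrix_le_submatrix h Sum.inl
  rwa [submatrix_smul, Pi.smul_apply, Pi.smul_apply, submatrix_one _ Sum.inl_injective] at h₁₁

theorem le_smul_one_of_fromBlocks_le_smul_one [DecidableEq m] [DecidableEq n] {b : ℝ}
    {A : Matrix m m 𝕜} {B : Matrix m n 𝕜} {C : Matrix n m 𝕜} {D : Matrix n n 𝕜}
    (h : fromBlocks A B C D ≤ b • 1) : D ≤ b • 1 := by
  have h₂₂ := submatrix_le_submatrix h Sum.inr
  rwa [submatrix_smul, Pi.smul_apply, Pi.smul_apply, submatrix_one _ Sum.inr_injective] at h₂₂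

theorem PosDef.of_smul_one_le [Fintype n] [DecidableEq n] {a : ℝ} (ha : 0 < a) {A : Matrix n n 𝕜}
    (h : a • 1 ≤ A) : A.PosDef := by
  simpa using (PosDef.one.smul ha).add_posSemidef (le_iff.mp h)

theorem conjTranspose_fromRows_mul_fromBlocks_mul_fromRows [Fintype m] [Fintype n]
    [DecidableEq n] {A : Matrix m m 𝕜} {B : Matrix m n 𝕜} {C : Matrix n n 𝕜}
    {X : Matrix m n 𝕜} (hX : A * X = B) :
    (fromRows (-X) (1 : Matrix n n 𝕜))ᴴ * fromBlocks A B Bᴴ C * fromRows (-X) (1 : Matrix n n 𝕜) =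
      C - Bᴴ * X := by
  rw [Matrix.mul_assoc, fromBlocks_mul_fromRows, conjTranspose_fromRows_eq_fromCols_conjTranspose,
    fromCols_mul_fromRows, Matrix.mul_neg, hX]
  simp [sub_eq_neg_add]

theorem smul_conjTranspose_mul_self_le_of_fromBlocks [Fintype m] [Fintype n] [DecidableEq m]
    [DecidableEq n] {A : Matrix m m 𝕜} {B : Matrix m n 𝕜} {C : Matrix n n 𝕜} {X : Matrix m n 𝕜}
    {a b : ℝ} (hA : A.PosSemidef) (hX : A * X = B) (ha : a • 1 ≤ fromBlocks A B Bᴴ C)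
    (hb : fromBlocks A B Bᴴ C ≤ b • 1) : a • (Xᴴ * X) ≤ (b - a) • 1 := by
  set V := fromRows (-X) (1 : Matrix n n 𝕜)
  have hVV : Vᴴ * V = Xᴴ * X + 1 := by
    simp [V, conjTranspose_fromRows_eq_fromCols_conjTranspose, fromCols_mul_fromRows]
  have hBX : Bᴴ * X = Xᴴ * A * X := by
    rw [← hX, conjTranspose_mul, hA.isHermitian.eq, Matrix.mul_assoc]
  have hcongr : a • (Xᴴ * X + 1) ≤ C - Bᴴ * X := by
    have h := (le_iff.mp ha).conjTranspose_mul_mul_same V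
    rwa [Matrix.mul_sub, Matrix.sub_mul, conjTranspose_fromRows_mul_fromBlocks_mul_fromRows hX,
      Matrix.mul_smul, Matrix.mul_one, Matrix.smul_mul, hVV] at h
  calc a • (Xᴴ * X) = a • (Xᴴ * X + 1) - a • 1 := by rw [smul_add, add_sub_cancel_right]
    _ ≤ C - Bᴴ * X - a • 1 := sub_le_sub_right hcongr _
    _ ≤ C - a • 1 :=
      sub_le_sub_right (sub_le_self _ (hBX ▸ (hA.conjTranspose_mul_mul_same X).nonneg)) _
    _ ≤ b • 1 - a • 1 := sub_le_sub_right (le_smul_one_of_fromBlocks_le_smul_one hb) _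
    _ = (b - a) • 1 := (sub_smul b a 1).symm

end Matrix

section l2norm

variable {ι κ : Type*} [Fintype ι] [Fintype κ]

theorem l2norm_eq_norm_toLp (v : ι → ℂ) : l2norm v = ‖WithLp.toLp 2 v‖ :=
  (EuclideanSpace.norm_eq _).symm

theorem l2norm_nonneg (v : ι → ℂ) : 0 ≤ l2norm v := Real.sqrt_nonneg _

theorem l2norm_add_le (u v : ι → ℂ) : l2norm (u + v) ≤ l2norm u + l2norm v := by
  simpa only [l2norm_eq_norm_toLp, WithLp.toLp_add] using norm_add_le _ _

theorem star_dotProduct_self_eq_l2norm_sq (v : ι → ℂ) :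
    star v ⬝ᵥ v = ((l2norm v ^ 2 : ℝ) : ℂ) := by
  rw [dotProduct_comm, ← EuclideanSpace.inner_toLp_toLp, l2norm_eq_norm_toLp,
    inner_self_eq_norm_sq_to_K]
  push_cast
  rfl

theorem smul_l2norm_mulVec_sq_le [DecidableEq κ] {X : Matrix ι κ ℂ} {a c : ℝ}
    (h : a • (Xᴴ * X) ≤ c • 1) (v : κ → ℂ) : a * l2norm (X *ᵥ v) ^ 2 ≤ c * l2norm v ^ 2 := by
  have h := (le_iff.mp h).dotProduct_mulVec_nonneg v
  rw [sub_mulVec, smul_mulVec, smul_mulVec, one_mulVec, ← mulVec_mulVec,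
    dotProduct_sub, dotProduct_smul, dotProduct_smul, dotProduct_mulVec, vecMul_conjTranspose,
    star_star, star_dotProduct_self_eq_l2norm_sq, star_dotProduct_self_eq_l2norm_sq,
    Complex.real_smul, Complex.real_smul] at h
  norm_cast at h
  linarith

theorem l2norm_mulVec_le [DecidableEq κ] {X : Matrix ι κ ℂ} {a c : ℝ} (ha : 0 < a)
    (h : a • (Xᴴ * X) ≤ c • 1) (v : κ → ℂ) : l2norm (X *ᵥ v) ≤ √(c / a) * l2norm v := by
  calc l2norm (X *ᵥ v) = √(l2norm (X *ᵥ v) ^ 2) := (Real.sqrt_sq (l2norm_nonneg _)).symm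
    _ ≤ √(c / a * l2norm v ^ 2) := by
      refine Real.sqrt_le_sqrt ?_
      rw [div_mul_eq_mul_div, le_div_iff₀ ha, mul_comm]
      exact smul_l2norm_mulVec_sq_le h v
    _ = √(c / a) * l2norm v := by
      rw [Real.sqrt_mul' _ (sq_nonneg _), Real.sqrt_sq (l2norm_nonneg v)]

theorem specNorm_le {M : Matrix ι κ ℂ} {K : ℝ} (hK : 0 ≤ K)
    (h : ∀ v, l2norm (M *ᵥ v) ≤ K * l2norm v) : specNorm M ≤ K := by
  refine Real.sSup_le ?_ hK
  rintro _ ⟨v, hv, rfl⟩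
  exact (h v).trans (mul_le_of_le_one_right hK hv)

end l2norm

theorem stmt_9_general (n q : ℕ)
    (A : Matrix (Fin n) (Fin n) ℂ) (B : Matrix (Fin n) (Fin q) ℂ)
    (C : Matrix (Fin q) (Fin q) ℂ)
    (fmin fmax : ℝ) (hfmin : 0 < fmin)
    (hR : (Matrix.fromBlocks A B Bᴴ C).IsHermitian)
    (heig : ∀ i, hR.eigenvalues i ∈ Set.Icc fmin fmax) :
    A.PosDef ∧ specNorm (A⁻¹ * B) ≤ Real.sqrt (fmax / fmin) ∧
      ∀ (u₁ : Fin n → ℂ) (u₂ : Fin q → ℂ),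
        l2norm (u₁ + (A⁻¹ * B) *ᵥ u₂)
          ≤ l2norm u₁ + Real.sqrt (fmax / fmin) * l2norm u₂ := by
  have hlo := hR.smul_one_le_of_le_eigenvalues fun i => (heig i).1
  have hhi := hR.le_smul_one_of_eigenvalues_le fun i => (heig i).2
  have hA : A.PosDef := .of_smul_one_le hfmin (smul_one_le_of_smul_one_le_fromBlocks hlo)
  have hX : A * (A⁻¹ * B) = B :=
    mul_nonsing_inv_cancel_left A B ((isUnit_iff_isUnit_det A).mp hA.isUnit)
  have hXX := smul_conjTranspose_mul_self_le_of_fromBlocks hA.posSemidef hX hlo hhi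
  have hbound (v : Fin q → ℂ) : l2norm ((A⁻¹ * B) *ᵥ v) ≤ √(fmax / fmin) * l2norm v :=
    calc _ ≤ √((fmax - fmin) / fmin) * l2norm v := l2norm_mulVec_le hfmin hXX v
      _ ≤ √(fmax / fmin) * l2norm v := by
        gcongr
        · exact l2norm_nonneg v
        · linarith
  refine ⟨hA, specNorm_le (Real.sqrt_nonneg _) hbound, fun u₁ u₂ => ?_⟩
  exact (l2norm_add_le _ _).trans (add_le_add le_rfl (hbound u₂))

/-- if `R = [A, B; B†, C]` is Hermitian with all eigenvalues in
`[f_min, f_max]`, `0 < f_min ≤ f_max`, then `A` is positive definite,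
`‖A⁻¹B‖₂ ≤ (f_max/f_min)^{1/2}`, and
`‖u₁ + A⁻¹B u₂‖₂ ≤ ‖u₁‖₂ + (f_max/f_min)^{1/2} ‖u₂‖₂`. -/
theorem stmt_9 (n q : ℕ) (hn : 1 ≤ n) (hq : 1 ≤ q)
    (A : Matrix (Fin n) (Fin n) ℂ) (B : Matrix (Fin n) (Fin q) ℂ)
    (C : Matrix (Fin q) (Fin q) ℂ)
    (fmin fmax : ℝ) (hfmin : 0 < fmin) (hf : fmin ≤ fmax)
    (hR : (Matrix.fromBlocks A B Bᴴ C).IsHermitian)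
    (heig : ∀ i, hR.eigenvalues i ∈ Set.Icc fmin fmax) :
    A.PosDef ∧ specNorm (A⁻¹ * B) ≤ Real.sqrt (fmax / fmin) ∧
      ∀ (u₁ : Fin n → ℂ) (u₂ : Fin q → ℂ),
        l2norm (u₁ + (A⁻¹ * B) *ᵥ u₂)
          ≤ l2norm u₁ + Real.sqrt (fmax / fmin) * l2norm u₂ :=
  stmt_9_general n q A B C fmin fmax hfmin hR heig
end
end

section
/- Let d ≥ 1 and p > d be integers, y, z ∈ ℕ^d with z_j ≥ y_j ≥ 1 for all j, and suppose ℓ_min := min_{1≤j≤d} (z_j − y_j) ≥ 1. Let K : ℤ^d → ℂ satisfy |K(h)| ≤ Q (max_{1≤j≤d} |h_j|)^{−p} for all h ∈ ℤ^d with h ≠ 0, where Q > 0. Then for every x_1 ∈ J_y, the sums Σ_{k ∈ ℤ^d, k ≠ 0} |K(x_1 − x_2 + (k ∘ z))| converge, and Σ_{x_2 ∈ J_y} Σ_{k ∈ ℤ^d, k ≠ 0} |K(x_1 − x_2 + (k ∘ z))| ≤ Σ_{ℓ = ℓ_min}^∞ ((2ℓ+1)^d − (2ℓ−1)^d) Q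 ℓ^{−p}. -/
/-!
For `x₂ ∈ J_y` and `k ≠ 0`, the point `h = x₁ - x₂ + k ∘ z` has a coordinate with
`|h_j| ≥ z_j - (y_j - 1) > ℓ_min`, and `(x₂, k) ↦ h` is injective because `|x₂ - x₂'| < y ≤ z`
coordinatewise. Hence the double sum is dominated by `∑ Q ‖h‖_∞^{-p}` over `‖h‖_∞ ≥ ℓ_min`, and
grouping by `‖h‖_∞ = ℓ` gives the right-hand side, since that sphere has `(2ℓ+1)^d − (2ℓ−1)^d`
points. The comparison is made in `ℝ≥0∞`, where it needs no summability; finiteness of the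
right-hand side (`p > d`) then gives back the summability of the inner sums.
-/

open scoped Real BigOperators

noncomputable section

/-- The lattice `J_y = {1,…,y_1} × ⋯ × {1,…,y_d} ⊆ ℤ^d`. -/
def latJ {d : ℕ} (y : Fin d → ℕ) : Finset (Fin d → ℤ) :=
  Finset.Icc 1 (fun j => (y j : ℤ))

open Finset Function
open scoped ENNReal

section IntSupNorm

variable {ι : Type*} [Fintype ι]

def intSupNorm (h : ι → ℤ) : ℕ := univ.sup fun j => (h j).natAbs

lemma intSupNorm_le_iff [DecidableEq ι] {h : ι → ℤ} {m : ℕ} :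
    intSupNorm h ≤ m ↔ h ∈ Fintype.piFinset fun _ => Icc (-(m : ℤ)) m := by
  simp only [intSupNorm, Finset.sup_le_iff, mem_univ, true_implies, Fintype.mem_piFinset, mem_Icc]
  exact forall_congr' fun j => by omega

lemma finite_setOf_intSupNorm_le (m : ℕ) : {h : ι → ℤ | intSupNorm h ≤ m}.Finite := by
  classical
  exact (Fintype.piFinset fun _ => Icc (-(m : ℤ)) m).finite_toSet.subset
    fun _ hh => intSupNorm_le_iff.mp hh

lemma tsum_comp_intSupNorm (g : ℕ → ℝ≥0∞) :
    ∑' h : ι → ℤ, g (intSupNorm h) = ∑' n, Nat.card {h : ι → ℤ // intSupNorm h = n} * g n := by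
  rw [← (Equiv.sigmaFiberEquiv intSupNorm).tsum_eq, ENNReal.tsum_sigma']
  refine tsum_congr fun n => ?_
  have : Finite {h : ι → ℤ // intSupNorm h = n} :=
    ((finite_setOf_intSupNorm_le n).subset fun _ hh => le_of_eq hh).to_subtype
  simp only [Equiv.sigmaFiberEquiv_apply]
  rw [tsum_congr fun h => congrArg g h.2, ENNReal.tsum_const, ENat.card_eq_coe_natCard]
  rfl

lemma card_intSupNorm_eq {n : ℕ} (hn : 1 ≤ n) :
    (Nat.card {h : ι → ℤ // intSupNorm h = n} : ℝ)
      = (2 * n + 1) ^ Fintype.card ι - (2 * n - 1) ^ Fintype.card ι := by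
  classical
  set B : ℕ → Finset (ι → ℤ) := fun m => Fintype.piFinset fun _ => Icc (-(m : ℤ)) m
  have card_B (m : ℕ) : (#(B m) : ℝ) = (2 * m + 1) ^ Fintype.card ι := by
    have hIcc : ((m : ℤ) + 1 - -(m : ℤ)).toNat = 2 * m + 1 := by omega
    simp only [B, Fintype.card_piFinset, Int.card_Icc, prod_const, card_univ, hIcc]
    push_cast
    ring
  have hsub : B (n - 1) ⊆ B n := fun _ hh =>
    intSupNorm_le_iff.mp ((intSupNorm_le_iff.mpr hh).trans (Nat.sub_le n 1))
  have e : {h : ι → ℤ // intSupNorm h = n} ≃ (B n \ B (n - 1) : Finset (ι → ℤ)) :=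
    Equiv.subtypeEquivRight fun h => by
      rw [mem_sdiff, ← intSupNorm_le_iff, ← intSupNorm_le_iff]
      omega
  rw [Nat.card_congr e, Nat.card_eq_fintype_card, Fintype.card_coe, card_sdiff_of_subset hsub,
    Nat.cast_sub (card_le_card hsub), card_B, card_B, Nat.cast_sub hn]
  ring_nf

end IntSupNorm

-- `(2x+1)^d - (2x-1)^d` is the size of the sphere of radius `x` (see `card_intSupNorm_eq`).
lemma abs_shell_le {d : ℕ} {x : ℝ} (hx : 1 ≤ x) :
    |(2 * x + 1) ^ d - (2 * x - 1) ^ d| ≤ 2 * d * 3 ^ (d - 1) * x ^ (d - 1) :=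
  calc |(2 * x + 1) ^ d - (2 * x - 1) ^ d|
      ≤ |2 * x + 1 - (2 * x - 1)| * d * max |2 * x + 1| |2 * x - 1| ^ (d - 1) :=
        abs_pow_sub_pow_le ..
    _ = 2 * d * (2 * x + 1) ^ (d - 1) := by
        rw [abs_of_nonneg (by linarith : (0 : ℝ) ≤ 2 * x + 1 - (2 * x - 1)),
          abs_of_nonneg (by linarith : (0 : ℝ) ≤ 2 * x + 1),
          abs_of_nonneg (by linarith : (0 : ℝ) ≤ 2 * x - 1), max_eq_left (by linarith)]
        ring
    _ ≤ 2 * d * (3 * x) ^ (d - 1) := by gcongr; linarith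
    _ = 2 * d * 3 ^ (d - 1) * x ^ (d - 1) := by ring

lemma summable_shell_mul_div_pow {d p : ℕ} (hdp : d < p) (Q : ℝ) :
    Summable fun n : ℕ => ((2 * (n : ℝ) + 1) ^ d - (2 * (n : ℝ) - 1) ^ d) * Q / (n : ℝ) ^ p := by
  suffices Summable fun n : ℕ => ((2 * (n : ℝ) + 1) ^ d - (2 * (n : ℝ) - 1) ^ d) / (n : ℝ) ^ p by
    simpa only [div_mul_eq_mul_div] using this.mul_right Q
  refine ((Real.summable_one_div_nat_pow.mpr one_lt_two).mul_left
    (2 * d * 3 ^ (d - 1) : ℝ)).of_norm_bounded_eventually_nat ?_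
  filter_upwards [Filter.eventually_ge_atTop 1] with n hn
  have hn' : (1 : ℝ) ≤ n := by exact_mod_cast hn
  obtain rfl | hd := Nat.eq_zero_or_pos d
  · simp
  rw [norm_div, Real.norm_eq_abs, norm_pow, Real.norm_natCast]
  calc |(2 * (n : ℝ) + 1) ^ d - (2 * (n : ℝ) - 1) ^ d| / (n : ℝ) ^ p
      ≤ 2 * d * 3 ^ (d - 1) * (n : ℝ) ^ (d - 1) / (n : ℝ) ^ p := by
        gcongr
        exact abs_shell_le hn'
    _ ≤ 2 * d * 3 ^ (d - 1) * (1 / (n : ℝ) ^ 2) := by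
        rw [mul_div_assoc]
        gcongr 2 * d * 3 ^ (d - 1) * ?_
        rw [div_le_div_iff₀ (by positivity) (by positivity), one_mul, ← pow_add]
        exact pow_le_pow_right₀ hn' (by omega)

section Lattice

variable {d : ℕ} {y z : Fin d → ℕ}

lemma mem_latJ {x : Fin d → ℤ} : x ∈ latJ y ↔ ∀ j, 1 ≤ x j ∧ x j ≤ y j := by
  simp [latJ, Pi.le_def, forall_and]

lemma abs_sub_lt_of_mem_latJ {x₁ x₂ : Fin d → ℤ} (hx₁ : x₁ ∈ latJ y) (hx₂ : x₂ ∈ latJ y)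
    (j : Fin d) : |x₁ j - x₂ j| < y j := by
  have h₁ := mem_latJ.mp hx₁ j
  have h₂ := mem_latJ.mp hx₂ j
  rw [abs_lt]
  constructor <;> linarith [h₁.1, h₁.2, h₂.1, h₂.2]

lemma injective_sub_add_mul (hyz : ∀ j, y j ≤ z j) (x₁ : Fin d → ℤ) :
    Injective fun pr : latJ y × (Fin d → ℤ) => x₁ - pr.1 + fun j => pr.2 j * z j := by
  rintro ⟨⟨x₂, hx₂⟩, k⟩ ⟨⟨x₂', hx₂'⟩, k'⟩ heq
  have hj (j : Fin d) : x₂' j - x₂ j = (k' j - k j) * z j := by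
    have := congrFun heq j
    simp only [Pi.add_apply, Pi.sub_apply] at this
    linarith
  have hx (j : Fin d) : x₂ j = x₂' j := by
    have hlt : |x₂' j - x₂ j| < z j :=
      (abs_sub_lt_of_mem_latJ hx₂' hx₂ j).trans_le (by exact_mod_cast hyz j)
    linarith [Int.eq_zero_of_abs_lt_dvd ⟨_, (hj j).trans (mul_comm _ _)⟩ hlt]
  have hk (j : Fin d) : k j = k' j := by
    have hz : (z j : ℤ) ≠ 0 := by
      have := (mem_latJ.mp hx₂ j); have := hyz j; omega
    have := hj j
    rw [hx j, sub_self, eq_comm, mul_eq_zero, sub_eq_zero] at this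
    exact (this.resolve_right hz).symm
  obtain rfl : x₂ = x₂' := funext hx
  obtain rfl : k = k' := funext hk
  rfl

lemma lt_intSupNorm_sub_add_mul {x₁ x₂ : Fin d → ℤ} (hx₁ : x₁ ∈ latJ y) (hx₂ : x₂ ∈ latJ y)
    {k : Fin d → ℤ} (hk : k ≠ 0) {L : ℕ} (hL : ∀ j, L + y j ≤ z j) :
    L < intSupNorm (x₁ - x₂ + fun j => k j * z j) := by
  obtain ⟨j, hj⟩ : ∃ j, k j ≠ 0 := Function.ne_iff.mp hk
  have hxj := abs_sub_lt_of_mem_latJ hx₁ hx₂ j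
  have hkz : (z j : ℤ) ≤ |k j * z j| := by
    rw [abs_mul, Nat.abs_cast]
    exact le_mul_of_one_le_left (by positivity) (Int.one_le_abs hj)
  have hLj : (L : ℤ) + y j ≤ z j := by exact_mod_cast hL j
  have : (L : ℤ) < |x₁ j - x₂ j + k j * z j| := by
    have := abs_sub_abs_le_abs_sub (k j * z j) (-(x₁ j - x₂ j))
    rw [sub_neg_eq_add, add_comm, abs_neg] at this
    linarith
  refine lt_of_lt_of_le ?_ (le_sup (f := fun j => _) (mem_univ j))
  rw [← Int.natCast_natAbs] at this
  exact_mod_cast this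

end Lattice

lemma sum_tsum_ofReal_norm_le {E : Type*} [SeminormedAddCommGroup E] {d p L : ℕ} {y z : Fin d → ℕ}
    (hL₀ : 1 ≤ L) (hL : ∀ j, L + y j ≤ z j) {K : (Fin d → ℤ) → E} {Q : ℝ}
    (hK : ∀ h, h ≠ 0 → ‖K h‖ ≤ Q / (intSupNorm h : ℝ) ^ p) {x₁ : Fin d → ℤ} (hx₁ : x₁ ∈ latJ y) :
    ∑ x₂ ∈ latJ y, ∑' k : {k : Fin d → ℤ // k ≠ 0},
        ENNReal.ofReal ‖K (x₁ - x₂ + fun j => k.1 j * z j)‖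
      ≤ ∑' n : {n : ℕ // L ≤ n},
        ENNReal.ofReal (((2 * (n : ℝ) + 1) ^ d - (2 * (n : ℝ) - 1) ^ d) * Q / (n : ℝ) ^ p) := by
  set g : ℕ → ℝ≥0∞ := {n | L ≤ n}.indicator fun n => ENNReal.ofReal (Q / (n : ℝ) ^ p)
  set φ : latJ y × {k : Fin d → ℤ // k ≠ 0} → (Fin d → ℤ) :=
    fun pr => x₁ - pr.1 + fun j => pr.2.1 j * z j
  have hφ : Injective φ :=
    (injective_sub_add_mul (fun j => le_of_add_le_right (hL j)) x₁).comp
      (injective_id.prodMap Subtype.val_injective)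
  have hKφ (pr : latJ y × {k : Fin d → ℤ // k ≠ 0}) :
      ENNReal.ofReal ‖K (φ pr)‖ ≤ g (intSupNorm (φ pr)) := by
    have hlt : L < intSupNorm (φ pr) := lt_intSupNorm_sub_add_mul hx₁ pr.1.2 pr.2.2 hL
    have hne : φ pr ≠ 0 := by
      intro h0
      rw [h0] at hlt
      simp [intSupNorm] at hlt
    simp only [g, Set.indicator_of_mem (show intSupNorm (φ pr) ∈ {n | L ≤ n} from hlt.le)]
    exact ENNReal.ofReal_le_ofReal (hK _ hne)
  calc ∑ x₂ ∈ latJ y, ∑' k : {k : Fin d → ℤ // k ≠ 0},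
        ENNReal.ofReal ‖K (x₁ - x₂ + fun j => k.1 j * z j)‖
      = ∑' pr, ENNReal.ofReal ‖K (φ pr)‖ := by
        rw [← Finset.tsum_subtype]
        exact (ENNReal.tsum_prod (f := fun x₂ k => ENNReal.ofReal ‖K (φ (x₂, k))‖)).symm
    _ ≤ ∑' pr, g (intSupNorm (φ pr)) := ENNReal.tsum_le_tsum hKφ
    _ ≤ ∑' h, g (intSupNorm h) := ENNReal.tsum_comp_le_tsum_of_injective hφ _
    _ = ∑' n, Nat.card {h : Fin d → ℤ // intSupNorm h = n} * g n := tsum_comp_intSupNorm g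
    _ = ∑' n : {n : ℕ // L ≤ n},
          Nat.card {h : Fin d → ℤ // intSupNorm h = n} * ENNReal.ofReal (Q / (n : ℝ) ^ p) := by
        refine (tsum_congr fun n => ?_).trans (_root_.tsum_subtype {n | L ≤ n} fun n =>
          Nat.card {h : Fin d → ℤ // intSupNorm h = n} * ENNReal.ofReal (Q / (n : ℝ) ^ p)).symm
        exact (Set.indicator_mul_right _
          (fun n => (Nat.card {h : Fin d → ℤ // intSupNorm h = n} : ℝ≥0∞)) _).symm
    _ = _ := tsum_congr fun n => by
        rw [← ENNReal.ofReal_natCast, ← ENNReal.ofReal_mul (Nat.cast_nonneg _),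
          card_intSupNorm_eq (hL₀.trans n.2), Fintype.card_fin, mul_div_assoc]

theorem stmt_10_general (d p : ℕ) (hdp : d < p)
    (y z : Fin d → ℕ) (hyz : ∀ j, 1 ≤ y j ∧ y j ≤ z j)
    (hl : 1 ≤ sInf (Set.range fun j => z j - y j))
    (K : (Fin d → ℤ) → ℂ) (Q : ℝ) (hQ : 0 < Q)
    (hK : ∀ h : Fin d → ℤ, h ≠ 0 →
      ‖K h‖ ≤ Q / (((Finset.univ.sup fun j => (h j).natAbs) : ℕ) : ℝ) ^ p) :
    ∀ x₁ ∈ latJ y,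
      (∀ x₂ ∈ latJ y,
        Summable fun k : {k : Fin d → ℤ // k ≠ 0} =>
          ‖K (x₁ - x₂ + fun j => k.1 j * (z j : ℤ))‖) ∧
      ∑ x₂ ∈ latJ y, ∑' k : {k : Fin d → ℤ // k ≠ 0},
          ‖K (x₁ - x₂ + fun j => k.1 j * (z j : ℤ))‖
        ≤ ∑' l : {l : ℕ // sInf (Set.range fun j => z j - y j) ≤ l},
            ((2 * (l.1 : ℝ) + 1) ^ d - (2 * (l.1 : ℝ) - 1) ^ d) * Q / (l.1 : ℝ) ^ p := by
  intro x₁ hx₁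
  set L := sInf (Set.range fun j => z j - y j)
  have hL (j : Fin d) : L + y j ≤ z j := by
    have := Nat.sInf_le (Set.mem_range_self (f := fun j => z j - y j) j)
    have := (hyz j).2
    omega
  have hterm_nonneg (n : {n : ℕ // L ≤ n}) :
      0 ≤ ((2 * (n : ℝ) + 1) ^ d - (2 * (n : ℝ) - 1) ^ d) * Q / (n : ℝ) ^ p := by
    have hn : (1 : ℝ) ≤ n := by exact_mod_cast hl.trans n.2
    have : (2 * n - 1 : ℝ) ^ d ≤ (2 * n + 1) ^ d :=
      pow_le_pow_left₀ (by linarith) (by linarith) d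
    have := hQ.le
    positivity
  have hbound := sum_tsum_ofReal_norm_le hl hL hK hx₁
  rw [← ENNReal.ofReal_tsum_of_nonneg hterm_nonneg
    ((summable_shell_mul_div_pow hdp Q).subtype _)] at hbound
  have hsummable (x₂) (hx₂ : x₂ ∈ latJ y) :
      Summable fun k : {k : Fin d → ℤ // k ≠ 0} => ‖K (x₁ - x₂ + fun j => k.1 j * (z j : ℤ))‖ :=
    (ENNReal.summable_toReal (ne_top_of_le_ne_top ENNReal.ofReal_ne_top
      ((single_le_sum (fun _ _ => bot_le) hx₂).trans hbound))).congr
      fun _ => ENNReal.toReal_ofReal (norm_nonneg _)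
  refine ⟨hsummable, ?_⟩
  rwa [← ENNReal.ofReal_le_ofReal_iff (tsum_nonneg hterm_nonneg),
    ENNReal.ofReal_sum_of_nonneg fun _ _ => tsum_nonneg fun _ => norm_nonneg _,
    sum_congr rfl fun x₂ hx₂ =>
      ENNReal.ofReal_tsum_of_nonneg (fun _ => norm_nonneg _) (hsummable x₂ hx₂)]

/-- if `|K(h)| ≤ Q (max_j |h_j|)^{−p}` for `h ≠ 0` and
`ℓ_min = min_j (z_j − y_j) ≥ 1`, then for every `x₁ ∈ J_y` the sums over nonzero `k` of
`|K(x₁ − x₂ + k∘z)|` converge and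
`Σ_{x₂ ∈ J_y} Σ_{k ≠ 0} |K(x₁ − x₂ + k∘z)| ≤ Σ_{ℓ ≥ ℓ_min} ((2ℓ+1)^d − (2ℓ−1)^d) Q ℓ^{−p}`. -/
theorem stmt_10 (d p : ℕ) (hd : 1 ≤ d) (hdp : d < p)
    (y z : Fin d → ℕ) (hyz : ∀ j, 1 ≤ y j ∧ y j ≤ z j)
    (hl : 1 ≤ sInf (Set.range fun j => z j - y j))
    (K : (Fin d → ℤ) → ℂ) (Q : ℝ) (hQ : 0 < Q)
    (hK : ∀ h : Fin d → ℤ, h ≠ 0 →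
      ‖K h‖ ≤ Q / (((Finset.univ.sup fun j => (h j).natAbs) : ℕ) : ℝ) ^ p) :
    ∀ x₁ ∈ latJ y,
      (∀ x₂ ∈ latJ y,
        Summable fun k : {k : Fin d → ℤ // k ≠ 0} =>
          ‖K (x₁ - x₂ + fun j => k.1 j * (z j : ℤ))‖) ∧
      ∑ x₂ ∈ latJ y, ∑' k : {k : Fin d → ℤ // k ≠ 0},
          ‖K (x₁ - x₂ + fun j => k.1 j * (z j : ℤ))‖
        ≤ ∑' l : {l : ℕ // sInf (Set.range fun j => z j - y j) ≤ l},
            ((2 * (l.1 : ℝ) + 1) ^ d - (2 * (l.1 : ℝ) - 1) ^ d) * Q / (l.1 : ℝ) ^ p :=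
  stmt_10_general d p hdp y z hyz hl K Q hQ hK

end
end
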